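/- Principle of optimality (tail optimality): if π* = (α_1,…,α_K) is an optimal policy for the problem starting at stage 1 from state z, then for any stage k₀ and any state z' reachable with positive probability at stage k₀ under π* from z, the truncated policy (α_{k₀},…,α_K) is optimal for the problem starting at stage k₀ from z'. -/

import Mathlib

/-!
Suppose the tail of `πs` were beaten at the reachable state `z'`. Dynamic programming yields a
tail policy (the greedy policy for the value function) that is optimal from every state at once;
splicing it onto `πs` after stage `m` lowers the tail cost everywhere and strictly at `z'`. The
cost of the first `m` stages is monotone in the terminal cost and, since `z'` is reached with
positive probability, strictly so at `z'`, so the spliced policy would beat `πs` from `z`.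
-/

/-- Expected cost-to-go of a policy, from stage `k` with `n` stages to go. -/
noncomputable def ecostK {Z A Ω : Type} [Fintype Ω] (h : Z → A → Ω → Z)
    (l : Z → A → Ω → ℝ) (p : Ω → ℝ) (φ : Z → ℝ) (π : ℕ → Z → A) :
    ℕ → ℕ → Z → ℝ
  | _, 0, z => φ z
  | k, n + 1, z => ∑ ω, p ω * (l z (π k z) ω +
      ecostK h l p φ π (k + 1) n (h z (π k z) ω))

/-- Probability of being at `z'` after `m` steps starting from `z` at stage `k`
under policy `π`. -/
noncomputable def reachP {Z A Ω : Type} [Fintype Ω] [DecidableEq Z]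
    (h : Z → A → Ω → Z) (p : Ω → ℝ) (π : ℕ → Z → A) : ℕ → ℕ → Z → Z → ℝ
  | _, 0, z, z' => if z = z' then 1 else 0
  | k, m + 1, z, z' => ∑ ω, p ω * reachP h p π (k + 1) m (h z (π k z) ω) z'

section DynamicProgramming

variable {Z A Ω : Type} [Fintype Ω] (h : Z → A → Ω → Z) (l : Z → A → Ω → ℝ) (p : Ω → ℝ)

theorem reachP_nonneg [DecidableEq Z] (hp : ∀ ω, 0 ≤ p ω) (π : ℕ → Z → A) (k m : ℕ) (z z' : Z) :
    0 ≤ reachP h p π k m z z' := by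
  induction m generalizing k z with
  | zero => simp only [reachP]; split_ifs <;> norm_num
  | succ m ih => exact Finset.sum_nonneg fun ω _ => mul_nonneg (hp ω) (ih _ _)

theorem ecostK_congr {φ : Z → ℝ} {π τ : ℕ → Z → A} {k n : ℕ}
    (hπτ : ∀ j < n, π (k + j) = τ (k + j)) : ecostK h l p φ π k n = ecostK h l p φ τ k n := by
  induction n generalizing k with
  | zero => rfl
  | succ n ih =>
    have hk : π k = τ k := hπτ 0 n.succ_pos
    have htail : ecostK h l p φ π (k + 1) n = ecostK h l p φ τ (k + 1) n :=
      ih fun j hj => by simpa only [Nat.add_right_comm, Nat.add_assoc] using hπτ (j + 1) (by omega)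
    funext z
    simp only [ecostK, hk, htail]

theorem ecostK_add (φ : Z → ℝ) (π : ℕ → Z → A) (k m n : ℕ) :
    ecostK h l p φ π k (m + n) = ecostK h l p (ecostK h l p φ π (k + m) n) π k m := by
  induction m generalizing k with
  | zero => funext z; simp [ecostK]
  | succ m ih =>
    funext z
    rw [Nat.add_right_comm m 1 n]
    simp only [ecostK, ih (k + 1), Nat.add_right_comm k 1 m, Nat.add_assoc]

noncomputable def bellman (V : Z → ℝ) (z : Z) (a : A) : ℝ :=
  ∑ ω, p ω * (l z a ω + V (h z a ω))

theorem ecostK_succ (φ : Z → ℝ) (π : ℕ → Z → A) (k n : ℕ) (z : Z) :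
    ecostK h l p φ π k (n + 1) z = bellman h l p (ecostK h l p φ π (k + 1) n) z (π k z) :=
  rfl

theorem bellman_mono (hp : ∀ ω, 0 ≤ p ω) {V W : Z → ℝ} (hVW : V ≤ W) (z : Z) (a : A) :
    bellman h l p V z a ≤ bellman h l p W z a :=
  Finset.sum_le_sum fun ω _ => mul_le_mul_of_nonneg_left (add_le_add_right (hVW _) _) (hp ω)

theorem ecostK_mono (hp : ∀ ω, 0 ≤ p ω) {φ ψ : Z → ℝ} (hφψ : φ ≤ ψ) (π : ℕ → Z → A) (k n : ℕ) :
    ecostK h l p φ π k n ≤ ecostK h l p ψ π k n := by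
  induction n generalizing k with
  | zero => exact hφψ
  | succ n ih => exact fun z => bellman_mono h l p hp (ih (k + 1)) z (π k z)

theorem ecostK_lt_of_reachP_pos [DecidableEq Z] (hp : ∀ ω, 0 ≤ p ω) {φ ψ : Z → ℝ} (hφψ : φ ≤ ψ)
    {z' : Z} (hz' : φ z' < ψ z') (π : ℕ → Z → A) (k m : ℕ) (z : Z)
    (hreach : 0 < reachP h p π k m z z') :
    ecostK h l p φ π k m z < ecostK h l p ψ π k m z := by
  induction m generalizing k z with
  | zero =>
    obtain rfl : z = z' := by
      by_contra hne
      simp [reachP, hne] at hreach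
    exact hz'
  | succ m ih =>
    obtain ⟨ω, -, hω⟩ : ∃ ω ∈ Finset.univ,
        (0 : ℝ) < p ω * reachP h p π (k + 1) m (h z (π k z) ω) z' :=
      Finset.exists_lt_of_sum_lt (by simpa only [Finset.sum_const_zero, reachP] using hreach)
    have hpω : 0 < p ω := pos_of_mul_pos_left hω (reachP_nonneg h p hp π _ _ _ _)
    have hreachω : 0 < reachP h p π (k + 1) m (h z (π k z) ω) z' :=
      pos_of_mul_pos_right hω (hp ω)
    refine Finset.sum_lt_sum (fun ω _ => ?_) ⟨ω, Finset.mem_univ ω, ?_⟩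
    · exact mul_le_mul_of_nonneg_left
        (add_le_add_right (ecostK_mono h l p hp hφψ π (k + 1) m _) _) (hp ω)
    · exact mul_lt_mul_of_pos_left (add_lt_add_right (ih (k + 1) _ hreachω) _) hpω

variable (Aset : Z → Finset A) (hA : ∀ z, (Aset z).Nonempty)

noncomputable def valueFn (φ : Z → ℝ) : ℕ → Z → ℝ
  | 0 => φ
  | n + 1 => fun z => (Aset z).inf' (hA z) (bellman h l p (valueFn φ n) z)

theorem valueFn_le_ecostK (hp : ∀ ω, 0 ≤ p ω) (φ : Z → ℝ) {π : ℕ → Z → A}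
    (hπ : ∀ k z, π k z ∈ Aset z) (k n : ℕ) :
    valueFn h l p Aset hA φ n ≤ ecostK h l p φ π k n := by
  induction n generalizing k with
  | zero => exact le_rfl
  | succ n ih =>
    intro z
    calc valueFn h l p Aset hA φ (n + 1) z
        ≤ bellman h l p (valueFn h l p Aset hA φ n) z (π k z) := Finset.inf'_le _ (hπ k z)
      _ ≤ bellman h l p (ecostK h l p φ π (k + 1) n) z (π k z) :=
          bellman_mono h l p hp (ih (k + 1)) z (π k z)

/-- `K` is the last stage, so after stage `k` there remain `K - k` stages. -/
noncomputable def greedyPolicy (φ : Z → ℝ) (K k : ℕ) (z : Z) : A :=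
  (Finset.exists_mem_eq_inf' (hA z) (bellman h l p (valueFn h l p Aset hA φ (K - k)) z)).choose

theorem greedyPolicy_mem (φ : Z → ℝ) (K k : ℕ) (z : Z) :
    greedyPolicy h l p Aset hA φ K k z ∈ Aset z :=
  (Finset.exists_mem_eq_inf' (hA z) _).choose_spec.1

theorem greedyPolicy_spec (φ : Z → ℝ) (K k : ℕ) (z : Z) :
    bellman h l p (valueFn h l p Aset hA φ (K - k)) z (greedyPolicy h l p Aset hA φ K k z) =
      (Aset z).inf' (hA z) (bellman h l p (valueFn h l p Aset hA φ (K - k)) z) :=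
  (Finset.exists_mem_eq_inf' (hA z) _).choose_spec.2.symm

theorem ecostK_greedyPolicy (φ : Z → ℝ) (K k n : ℕ) (hkn : k + n = K + 1) :
    ecostK h l p φ (greedyPolicy h l p Aset hA φ K) k n = valueFn h l p Aset hA φ n := by
  induction n generalizing k with
  | zero => rfl
  | succ n ih =>
    funext z
    have hKk : K - k = n := by omega
    rw [ecostK_succ, ih (k + 1) (by omega), ← hKk, greedyPolicy_spec]
    rfl

end DynamicProgramming

theorem stmt13_general {Z A Ω : Type} [Fintype Ω] [DecidableEq Z]
    (Aset : Z → Finset A) (hA : ∀ z, (Aset z).Nonempty)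
    (h : Z → A → Ω → Z) (l : Z → A → Ω → ℝ) (p : Ω → ℝ) (φ : Z → ℝ)
    (hp : ∀ ω, 0 ≤ p ω)
    (K : ℕ) (z : Z) (πs : ℕ → Z → A) (hadm : ∀ k z', πs k z' ∈ Aset z')
    (hopt : ∀ π : ℕ → Z → A, (∀ k z', π k z' ∈ Aset z') →
      ecostK h l p φ πs 1 K z ≤ ecostK h l p φ π 1 K z)
    (m : ℕ) (hm : m ≤ K) (z' : Z) (hreach : 0 < reachP h p πs 1 m z z') :
    ∀ π : ℕ → Z → A, (∀ k z'', π k z'' ∈ Aset z'') →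
      ecostK h l p φ πs (1 + m) (K - m) z' ≤
        ecostK h l p φ π (1 + m) (K - m) z' := by
  intro π hπ
  set V := valueFn h l p Aset hA φ (K - m)
  set σ := greedyPolicy h l p Aset hA φ K
  let π' : ℕ → Z → A := fun k => if k < 1 + m then πs k else σ k
  have hπ' : ∀ k z'', π' k z'' ∈ Aset z'' := fun k z'' => by
    by_cases hk : k < 1 + m <;> simp [π', hk, hadm, σ, greedyPolicy_mem]
  have hV : V ≤ ecostK h l p φ πs (1 + m) (K - m) := valueFn_le_ecostK h l p Aset hA hp φ hadm _ _
  have hsplice : ecostK h l p φ π' 1 K z = ecostK h l p V πs 1 m z := by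
    have htail : ecostK h l p φ π' (1 + m) (K - m) = V := by
      rw [ecostK_congr h l p (τ := σ) fun j _ => if_neg (by omega)]
      exact ecostK_greedyPolicy h l p Aset hA φ K _ _ (by omega)
    rw [← Nat.add_sub_cancel' hm, ecostK_add, htail,
      ecostK_congr h l p (τ := πs) fun j _ => if_pos (by omega)]
  refine le_trans (not_lt.mp fun hlt => ?_) (valueFn_le_ecostK h l p Aset hA hp φ hπ _ _ z')
  have hbetter := ecostK_lt_of_reachP_pos h l p hp hV hlt πs 1 m z hreach
  rw [← hsplice, ← ecostK_add, Nat.add_sub_cancel' hm] at hbetter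
  exact (hopt π' hπ').not_gt hbetter

/-- Principle of optimality: the tail of an optimal policy is optimal at any
state reachable with positive probability. -/
theorem stmt13 {Z A Ω : Type} [Fintype Ω] [DecidableEq Z]
    (Aset : Z → Finset A) (hA : ∀ z, (Aset z).Nonempty)
    (h : Z → A → Ω → Z) (l : Z → A → Ω → ℝ) (p : Ω → ℝ) (φ : Z → ℝ)
    (hp : ∀ ω, 0 ≤ p ω) (hps : ∑ ω, p ω = 1)
    (K : ℕ) (z : Z) (πs : ℕ → Z → A) (hadm : ∀ k z', πs k z' ∈ Aset z')
    (hopt : ∀ π : ℕ → Z → A, (∀ k z', π k z' ∈ Aset z') →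
      ecostK h l p φ πs 1 K z ≤ ecostK h l p φ π 1 K z)
    (m : ℕ) (hm : m ≤ K) (z' : Z) (hreach : 0 < reachP h p πs 1 m z z') :
    ∀ π : ℕ → Z → A, (∀ k z'', π k z'' ∈ Aset z'') →
      ecostK h l p φ πs (1 + m) (K - m) z' ≤
        ecostK h l p φ π (1 + m) (K - m) z' :=
  stmt13_general Aset hA h l p φ hp K z πs hadm hopt m hm z' hreach
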